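/- Let F be a field, let k be a natural number, and let G be a finite simple graph on a linearly ordered vertex type V such that every vertex has at most k neighbors strictly smaller than it. Assign to each edge e of G (with endpoints u_e < v_e) elements a_e, b_e, c_e ∈ F with a_e ≠ 0 and b_e ≠ 0, and assign to each vertex w a finite set A_w ⊆ F with |A_w| ≥ k + 1. Then there exists a function f : V → F with f(w) ∈ A_w for every vertex w such that a_e·f(u_e) + b_e·f(v_e) + c_e ≠ 0 for every edge e of G. -/

import Mathlib

/-! Colour the vertices greedily in increasing order. When `w` is reached, each of its at most
`k` smaller neighbours `u` already has its colour, and since `b ≠ 0` the edge `uw` excludes exactly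
one value for `w`, namely `-(a f(u) + c) / b`; so one of the `k + 1` values in `A w` is left. -/

open Finset

theorem WellFounded.exists_forall_choice {V α : Type*} {r : V → V → Prop} (hr : WellFounded r)
    (P : (w : V) → ((u : V) → r u w → α) → α → Prop) (hP : ∀ w g, ∃ x, P w g x) :
    ∃ f : V → α, ∀ w, P w (fun u _ => f u) (f w) := by
  choose pick hpick using hP
  exact ⟨hr.fix pick, fun w => by rw [hr.fix_eq]; exact hpick w _⟩

theorem Finset.exists_mem_forall_mul_add_ne_zero {ι F : Type*} [Field F] {s : Finset ι}
    {A : Finset F} (hs : #s < #A) (q d : ι → F) (hq : ∀ i ∈ s, q i ≠ 0) :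
    ∃ x ∈ A, ∀ i ∈ s, q i * x + d i ≠ 0 := by
  classical
  obtain ⟨x, hxA, hx⟩ := exists_mem_notMem_of_card_lt_card
    ((card_image_le (s := s) (f := fun i => -d i / q i)).trans_lt hs)
  refine ⟨x, hxA, fun i hi hroot => hx (mem_image.2 ⟨i, hi, ?_⟩)⟩
  rw [div_eq_iff (hq i hi)]
  linear_combination -hroot

theorem Sym2.mk_inf_sup {α : Type*} [LinearOrder α] (e : Sym2 α) : s(e.inf, e.sup) = e :=
  sortEquiv.symm_apply_apply e

namespace SimpleGraph

variable {V : Type*} [LinearOrder V] {G : SimpleGraph V} {e : Sym2 V}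

theorem adj_inf_sup (he : e ∈ G.edgeSet) : G.Adj e.inf e.sup := by
  rwa [← mem_edgeSet, Sym2.mk_inf_sup]

theorem inf_lt_sup_of_mem_edgeSet (he : e ∈ G.edgeSet) : e.inf < e.sup :=
  e.inf_le_sup.lt_of_ne (adj_inf_sup he).ne

theorem exists_mem_forall_lower_adj_ne_zero {F : Type*} [Field F] {w : V}
    [Fintype (G.neighborSet w)] (a b c : Sym2 V → F) (hb : ∀ u, G.Adj u w → b s(u, w) ≠ 0)
    {A : Finset F} (hA : #((G.neighborFinset w).filter fun u => u < w) < #A)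
    (g : (u : V) → u < w → F) :
    ∃ x ∈ A, ∀ u (hu : u < w), G.Adj u w → a s(u, w) * g u hu + b s(u, w) * x + c s(u, w) ≠ 0 := by
  set lower := (G.neighborFinset w).filter fun u => u < w
  have mem_lower {u} : u ∈ lower ↔ G.Adj u w ∧ u < w := by
    rw [mem_filter, mem_neighborFinset, adj_comm]
  obtain ⟨x, hxA, hx⟩ := exists_mem_forall_mul_add_ne_zero (s := lower.attach)
    (by rwa [card_attach]) (fun u => b s(u.1, w))
    (fun u => a s(u.1, w) * g u (mem_lower.1 u.2).2 + c s(u.1, w))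
    (fun u _ => hb u (mem_lower.1 u.2).1)
  refine ⟨x, hxA, fun u hu hadj hroot => ?_⟩
  exact hx ⟨u, mem_lower.2 ⟨hadj, hu⟩⟩ (mem_attach _ _) (by linear_combination hroot)

end SimpleGraph

theorem field_choosable_of_degenerate_general {F : Type*} [Field F]
    {V : Type*} [Fintype V] [LinearOrder V] (k : ℕ)
    (G : SimpleGraph V) [DecidableRel G.Adj]
    (hcol : ∀ w : V, ((G.neighborFinset w).filter fun u => u < w).card ≤ k)
    (a b c : Sym2 V → F)
    (hb : ∀ e ∈ G.edgeFinset, b e ≠ 0)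
    (A : V → Finset F) (hA : ∀ w, k + 1 ≤ (A w).card) :
    ∃ f : V → F, (∀ w, f w ∈ A w) ∧
      ∀ e ∈ G.edgeFinset, a e * f e.inf + b e * f e.sup + c e ≠ 0 := by
  obtain ⟨f, hf⟩ := wellFounded_lt.exists_forall_choice
    (fun w g x => x ∈ A w ∧ ∀ u (hu : u < w), G.Adj u w →
      a s(u, w) * g u hu + b s(u, w) * x + c s(u, w) ≠ 0)
    fun w g => G.exists_mem_forall_lower_adj_ne_zero a b c
      (fun u hadj => hb _ (G.mem_edgeFinset.2 hadj)) ((hcol w).trans_lt (hA w)) g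
  refine ⟨f, fun w => (hf w).1, fun e he => ?_⟩
  rw [G.mem_edgeFinset] at he
  simpa only [Sym2.mk_inf_sup] using
    (hf e.sup).2 e.inf (G.inf_lt_sup_of_mem_edgeSet he) (G.adj_inf_sup he)

/-- Field choosability for `k`-degenerately ordered graphs: if every vertex of `G` has at most
`k` smaller neighbors, the decoration coefficients `a e, b e` are nonzero, and each vertex `w`
has a list `A w` of at least `k + 1` elements of `F`, then there is a coloring `f` from the
lists with `a_e·f(min e) + b_e·f(max e) + c_e ≠ 0` for every edge `e`. -/
theorem field_choosable_of_degenerate {F : Type*} [Field F]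
    {V : Type*} [Fintype V] [LinearOrder V] (k : ℕ)
    (G : SimpleGraph V) [DecidableRel G.Adj]
    (hcol : ∀ w : V, ((G.neighborFinset w).filter fun u => u < w).card ≤ k)
    (a b c : Sym2 V → F)
    (ha : ∀ e ∈ G.edgeFinset, a e ≠ 0) (hb : ∀ e ∈ G.edgeFinset, b e ≠ 0)
    (A : V → Finset F) (hA : ∀ w, k + 1 ≤ (A w).card) :
    ∃ f : V → F, (∀ w, f w ∈ A w) ∧
      ∀ e ∈ G.edgeFinset, a e * f e.inf + b e * f e.sup + c e ≠ 0 :=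
  field_choosable_of_degenerate_general k G hcol a b c hb A hA
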